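/- The shadow map of the autonomous d₄P^(I) map possesses three independent rational invariants: for all x, y, z, u, x₁ in ℂ with x ≠ 0, if x·x₁ = yz + z² + zu − x² − xy, then Σ₂(x₁, x, y, z) = Σ₂(x, y, z, u), Σ₃(x₁, x, y, z) = Σ₃(x, y, z, u), and Σ₄(x₁, x, y, z) = Σ₄(x, y, z, u). -/
import Mathlib

/-- First invariant `Sigma₂` of the shadow map `φ_s^(I)`. -/
noncomputable def Sigma₂ (x y z u : ℂ) : ℂ := z*u + x*y + y^2 + 2*y*z + z^2

/-- Second invariant `Sigma₃` of the shadow map `φ_s^(I)`. -/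
noncomputable def Sigma₃ (x y z u : ℂ) : ℂ := y * z * (x + y + z + u)

/-- Third invariant `Sigma₄` of the shadow map `φ_s^(I)`. -/
noncomputable def Sigma₄ (x y z u : ℂ) : ℂ := y * z * (x + y + z) * (u + y + z)

/-- The shadow map `φ_s^(I)` of the autonomous `d₄P^(I)` map possesses the three
independent rational invariants `Sigma₂`, `Sigma₃`, `Sigma₄`. -/
theorem d4PI_shadow_three_invariants (x y z u x₁ : ℂ) (h : x ≠ 0)
    (hrec : x * x₁ = y*z + z^2 + z*u - x^2 - x*y) :
    Sigma₂ x₁ x y z = Sigma₂ x y z u ∧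
    Sigma₃ x₁ x y z = Sigma₃ x y z u ∧
    Sigma₄ x₁ x y z = Sigma₄ x y z u := by
  have hx1 : x₁ = (y*z + z^2 + z*u - x^2 - x*y) / x := by
    field_simp
    linear_combination hrec
  subst hx1
  refine ⟨?_, ?_, ?_⟩ <;> simp only [Sigma₂, Sigma₃, Sigma₄] <;> field_simp <;> ring
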